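/- arXiv:1905.05971 — 4 statements merged into one kernel-verified Lean document; each statement's English description precedes it below -/
import Mathlib

section
/- Let G be a locally compact group, H a compact subgroup, m the normalized G-invariant measure on G/H satisfying Weil's formula, and φ a Young function. Then for every f ∈ C_c(G) and every k > 0, the modular satisfies ∫_{G/H} φ(|T_H(f)(xH)|/k) dm(xH) ≤ ∫_G φ(|f(x)|/k) dx. -/
open MeasureTheory Filter Topology ENNReal NNReal

/-- A Young function: nonzero, convex, even, left continuous, vanishing at `0`,
tending to `∞` at `∞`. -/
def IsYoung (φ : ℝ → ℝ≥0∞) : Prop :=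
  φ ≠ 0 ∧
  (∀ x y a b : ℝ, 0 ≤ a → 0 ≤ b → a + b = 1 →
    φ (a * x + b * y) ≤ ENNReal.ofReal a * φ x + ENNReal.ofReal b * φ y) ∧
  (∀ x, φ (-x) = φ x) ∧
  (∀ x, Tendsto φ (nhdsWithin x (Set.Iio x)) (nhds (φ x))) ∧
  φ 0 = 0 ∧ Tendsto φ atTop (nhds ⊤)

/-- The Luxemburg (gauge) norm on the Orlicz space `L^φ`. -/
noncomputable def luxNorm {α E : Type*} [MeasurableSpace α] [NormedAddCommGroup E]
    (φ : ℝ → ℝ≥0∞) (m : Measure α) (f : α → E) : ℝ :=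
  sInf {k : ℝ | 0 < k ∧ ∫⁻ x, φ (‖f x‖ / k) ∂m ≤ 1}

/-- Membership in the Orlicz space `L^φ`. -/
def MemLphi {α E : Type*} [MeasurableSpace α] [NormedAddCommGroup E]
    (φ : ℝ → ℝ≥0∞) (m : Measure α) (f : α → E) : Prop :=
  AEStronglyMeasurable f m ∧ ∃ a : ℝ, 0 < a ∧ ∫⁻ x, φ (a * ‖f x‖) ∂m < ⊤

/-- The `Δ₂`-condition for a Young function. -/
def IsDelta2 (φ : ℝ → ℝ≥0∞) : Prop :=
  ∃ C : ℝ≥0, 0 < C ∧ ∀ x : ℝ, 0 ≤ x → φ (2 * x) ≤ (C : ℝ≥0∞) * φ x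


section Aux

variable {φ : ℝ → ℝ≥0∞}

lemma young_mono
    (hconv : ∀ x y a b : ℝ, 0 ≤ a → 0 ≤ b → a + b = 1 →
      φ (a * x + b * y) ≤ ENNReal.ofReal a * φ x + ENNReal.ofReal b * φ y)
    (h0 : φ 0 = 0) : ∀ s t : ℝ, 0 ≤ s → s ≤ t → φ s ≤ φ t := by
  intro s t hs hst
  rcases eq_or_lt_of_le (hs.trans hst) with ht | ht
  · have hs0 : s = 0 := le_antisymm (hst.trans ht.symm.le) hs
    rw [hs0, ← ht]
  · have h := hconv t 0 (s / t) (1 - s / t) (div_nonneg hs ht.le)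
      (by rw [sub_nonneg]; exact div_le_one_of_le₀ hst ht.le) (by ring)
    have harg : s / t * t + (1 - s / t) * 0 = s := by field_simp; ring
    rw [harg, h0, mul_zero, add_zero] at h
    calc φ s ≤ ENNReal.ofReal (s / t) * φ t := h
      _ ≤ 1 * φ t := by
          gcongr
          exact ENNReal.ofReal_le_one.mpr (div_le_one_of_le₀ hst ht.le)
      _ = φ t := one_mul _

lemma young_conv_real
    (hconv : ∀ x y a b : ℝ, 0 ≤ a → 0 ≤ b → a + b = 1 →
      φ (a * x + b * y) ≤ ENNReal.ofReal a * φ x + ENNReal.ofReal b * φ y)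
    {x y z : ℝ} (hxz : x < z) (hzy : z < y) (hx : φ x ≠ ⊤) (hy : φ y ≠ ⊤) :
    φ z ≠ ⊤ ∧ (φ z).toReal * (y - x) ≤ (φ x).toReal * (y - z) + (φ y).toReal * (z - x) := by
  have hxy : x < y := hxz.trans hzy
  have hyx : (0:ℝ) < y - x := by linarith
  set a := (y - z) / (y - x) with ha_def
  set b := (z - x) / (y - x) with hb_def
  have ha : 0 ≤ a := div_nonneg (by linarith) hyx.le
  have hb : 0 ≤ b := div_nonneg (by linarith) hyx.le
  have hab : a + b = 1 := by
    rw [ha_def, hb_def, ← add_div, div_eq_one_iff_eq hyx.ne']; ring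
  have hz : a * x + b * y = z := by
    rw [ha_def, hb_def, div_mul_eq_mul_div, div_mul_eq_mul_div, ← add_div,
      div_eq_iff hyx.ne']; ring
  have h := hconv x y a b ha hb hab
  rw [hz] at h
  have hfin : ENNReal.ofReal a * φ x + ENNReal.ofReal b * φ y ≠ ⊤ := by
    exact ENNReal.add_ne_top.mpr ⟨ENNReal.mul_ne_top ofReal_ne_top hx,
      ENNReal.mul_ne_top ofReal_ne_top hy⟩
  refine ⟨ne_top_of_le_ne_top hfin h, ?_⟩
  have h2 : (φ z).toReal ≤ a * (φ x).toReal + b * (φ y).toReal := by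
    have h3 := ENNReal.toReal_mono hfin h
    rwa [ENNReal.toReal_add (ENNReal.mul_ne_top ofReal_ne_top hx)
      (ENNReal.mul_ne_top ofReal_ne_top hy), ENNReal.toReal_mul, ENNReal.toReal_mul,
      ENNReal.toReal_ofReal ha, ENNReal.toReal_ofReal hb] at h3
  have h4 := mul_le_mul_of_nonneg_right h2 hyx.le
  have ha' : a * (y - x) = y - z := div_mul_cancel₀ _ hyx.ne'
  have hb' : b * (y - x) = z - x := div_mul_cancel₀ _ hyx.ne'
  have h5 : (a * (φ x).toReal + b * (φ y).toReal) * (y - x)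
      = (φ x).toReal * (y - z) + (φ y).toReal * (z - x) := by
    rw [← ha', ← hb']; ring
  linarith [h4, h5]

lemma jensen_young {α : Type*} [MeasurableSpace α] (ν : Measure α) [IsProbabilityMeasure ν]
    (hconv : ∀ x y a b : ℝ, 0 ≤ a → 0 ≤ b → a + b = 1 →
      φ (a * x + b * y) ≤ ENNReal.ofReal a * φ x + ENNReal.ofReal b * φ y)
    (hlc : ∀ x, Tendsto φ (nhdsWithin x (Set.Iio x)) (nhds (φ x)))
    (h0 : φ 0 = 0)
    (g : α → ℝ) (hgm : Measurable g) (hgi : Integrable g ν) (hg0 : ∀ a, 0 ≤ g a) :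
    φ (∫ a, g a ∂ν) ≤ ∫⁻ a, φ (g a) ∂ν := by
  have mono := young_mono hconv h0
  set t₀ := ∫ a, g a ∂ν with ht₀def
  have ht₀0 : 0 ≤ t₀ := integral_nonneg hg0
  set I := ∫⁻ a, φ (g a) ∂ν with hIdef
  rcases eq_or_lt_of_le ht₀0 with h | h
  · rw [← h, h0]; exact zero_le
  -- it suffices to show φ t ≤ I for all 0 ≤ t < t₀
  have key : ∀ t : ℝ, 0 ≤ t → t < t₀ → φ t ≤ I := by
    intro t ht0 htt₀
    -- if φ is infinite somewhere on [t, t₀), then I = ⊤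
    by_cases htop : ∃ u, t ≤ u ∧ u < t₀ ∧ φ u = ⊤
    · obtain ⟨u, htu, hut₀, hu⟩ := htop
      have hpos : ν {a | u < g a} ≠ 0 := by
        intro hzero
        have hle : ∀ᵐ a ∂ν, g a ≤ u := by
          rw [ae_iff]
          simpa [not_le] using hzero
        have ht0u : t₀ ≤ u := by
          calc t₀ = ∫ a, g a ∂ν := rfl
            _ ≤ ∫ _a, u ∂ν := integral_mono_ae hgi (integrable_const u) hle
            _ = u := by simp
        linarith
      have hIeq : I = ⊤ := by
        have hmeas : MeasurableSet {a | u < g a} := measurableSet_lt measurable_const hgm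
        have hle : ∀ a, ({a | u < g a}).indicator (fun _ => (⊤ : ℝ≥0∞)) a ≤ φ (g a) := by
          intro a
          by_cases hau : a ∈ {a | u < g a}
          · rw [Set.indicator_of_mem hau, ← hu]
            exact mono u (g a) (ht0.trans htu) (le_of_lt hau)
          · rw [Set.indicator_of_notMem hau]
            exact zero_le
        refine top_le_iff.mp ?_
        calc (⊤:ℝ≥0∞) = ⊤ * ν {a | u < g a} := (ENNReal.top_mul hpos).symm
          _ = ∫⁻ a, ({a | u < g a}).indicator (fun _ => (⊤:ℝ≥0∞)) a ∂ν :=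
              (lintegral_indicator_const hmeas ⊤).symm
          _ ≤ I := lintegral_mono hle
      rw [hIeq]; exact le_top
    push_neg at htop
    have hfin : ∀ u, t ≤ u → u < t₀ → φ u ≠ ⊤ := htop
    have hft : φ t ≠ ⊤ := hfin t le_rfl htt₀
    set ψ : ℝ → ℝ := fun s => (φ s).toReal with hψdef
    set t₁ := (t + t₀)/2 with ht₁def
    have ht₁1 : t < t₁ := by rw [ht₁def]; linarith
    have ht₁2 : t₁ < t₀ := by rw [ht₁def]; linarith
    have hft₁ : φ t₁ ≠ ⊤ := hfin t₁ ht₁1.le ht₁2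
    set S := (fun u => (ψ u - ψ t)/(u - t)) '' Set.Ioc t t₁ with hSdef
    have hSne : S.Nonempty := ⟨_, ⟨t₁, ⟨ht₁1, le_rfl⟩, rfl⟩⟩
    have hσ0 : ∀ c ∈ S, 0 ≤ c := by
      rintro _ ⟨u, ⟨hu1, hu2⟩, rfl⟩
      have hfu : φ u ≠ ⊤ := hfin u hu1.le (lt_of_le_of_lt hu2 ht₁2)
      have hmu : ψ t ≤ ψ u := ENNReal.toReal_mono hfu (mono t u ht0 hu1.le)
      exact div_nonneg (by linarith) (by linarith)
    have hbdd : BddBelow S := ⟨0, hσ0⟩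
    set c := sInf S with hcdef
    have hc0 : 0 ≤ c := le_csInf hSne hσ0
    -- supporting line
    have hline : ∀ s : ℝ, 0 ≤ s → ENNReal.ofReal (ψ t + c * (s - t)) ≤ φ s := by
      intro s hs
      rcases lt_trichotomy s t with hst | hst | hst
      · -- s < t
        have hfs : φ s ≠ ⊤ := ne_top_of_le_ne_top hft (mono s t hs hst.le)
        have hkey : (ψ t - ψ s)/(t - s) ≤ c := by
          refine le_csInf hSne ?_
          rintro _ ⟨u, ⟨hu1, hu2⟩, rfl⟩
          have hfu : φ u ≠ ⊤ := hfin u hu1.le (lt_of_le_of_lt hu2 ht₁2)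
          obtain ⟨-, hq⟩ := young_conv_real hconv hst hu1 hfs hfu
          rw [div_le_div_iff₀ (by linarith) (by linarith)]
          -- (ψ t - ψ s) * (u - t) ≤ (ψ u - ψ t) * (t - s)
          nlinarith [hq]
        have h1 : ψ t + c * (s - t) ≤ ψ s := by
          rw [div_le_iff₀ (by linarith : (0:ℝ) < t - s)] at hkey
          nlinarith [hkey]
        calc ENNReal.ofReal (ψ t + c * (s - t)) ≤ ENNReal.ofReal (ψ s) :=
              ENNReal.ofReal_le_ofReal h1
          _ ≤ φ s := ENNReal.ofReal_toReal_le
      · subst hst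
        simp only [sub_self, mul_zero, add_zero]
        exact ENNReal.ofReal_toReal_le
      · -- t < s
        by_cases hfs : φ s = ⊤
        · rw [hfs]; exact le_top
        have hcs : c ≤ (ψ s - ψ t)/(s - t) := by
          rcases le_or_gt s t₁ with hst₁ | hst₁
          · exact csInf_le hbdd ⟨s, ⟨hst, hst₁⟩, rfl⟩
          · have hc1 : c ≤ (ψ t₁ - ψ t)/(t₁ - t) := csInf_le hbdd ⟨t₁, ⟨ht₁1, le_rfl⟩, rfl⟩
            refine hc1.trans ?_
            obtain ⟨-, hq⟩ := young_conv_real hconv ht₁1 hst₁ hft hfs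
            rw [div_le_div_iff₀ (by linarith) (by linarith)]
            nlinarith [hq]
        have h1 : ψ t + c * (s - t) ≤ ψ s := by
          rw [le_div_iff₀ (by linarith : (0:ℝ) < s - t)] at hcs
          linarith
        calc ENNReal.ofReal (ψ t + c * (s - t)) ≤ ENNReal.ofReal (ψ s) :=
              ENNReal.ofReal_le_ofReal h1
          _ ≤ φ s := ENNReal.ofReal_toReal_le
    -- integrate the supporting line
    set L : α → ℝ := fun a => ψ t + c * (g a - t) with hLdef
    have hgt : Integrable (fun a => c * (g a - t)) ν :=
      ((hgi.sub (integrable_const t)).const_mul c : Integrable (fun a => c * (g a - t)) ν)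
    have hLi : Integrable L ν := (integrable_const (ψ t)).add hgt
    have hLint : ∫ a, L a ∂ν = ψ t + c * (t₀ - t) := by
      have h1 : ∫ a, (g a - t) ∂ν = t₀ - t := by
        rw [integral_sub hgi (integrable_const t), integral_const]
        simp [ht₀def]
      rw [hLdef]
      rw [integral_add (integrable_const _) hgt, integral_const, integral_const_mul, h1]
      simp
    have hL'i : Integrable (fun a => max (L a) 0) ν := hLi.pos_part
    have h2 : ENNReal.ofReal (∫ a, max (L a) 0 ∂ν) = ∫⁻ a, ENNReal.ofReal (max (L a) 0) ∂ν :=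
      ofReal_integral_eq_lintegral_ofReal hL'i
        (Filter.Eventually.of_forall fun a => le_max_right _ _)
    have key2 : ∀ a, ENNReal.ofReal (max (L a) 0) ≤ φ (g a) := by
      intro a
      rcases le_total (L a) 0 with h' | h'
      · rw [max_eq_right h']
        simp
      · rw [max_eq_left h']
        exact hline (g a) (hg0 a)
    calc φ t = ENNReal.ofReal (ψ t) := (ENNReal.ofReal_toReal hft).symm
      _ ≤ ENNReal.ofReal (∫ a, L a ∂ν) := by
          apply ENNReal.ofReal_le_ofReal
          rw [hLint]
          nlinarith [hc0]
      _ ≤ ENNReal.ofReal (∫ a, max (L a) 0 ∂ν) := by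
          apply ENNReal.ofReal_le_ofReal
          exact integral_mono hLi hL'i (fun a => le_max_left _ _)
      _ = ∫⁻ a, ENNReal.ofReal (max (L a) 0) ∂ν := h2
      _ ≤ ∫⁻ a, φ (g a) ∂ν := lintegral_mono key2
      _ = I := rfl
  -- take the left limit
  have hne : (nhdsWithin t₀ (Set.Iio t₀)).NeBot := by infer_instance
  refine le_of_tendsto (hlc t₀) ?_
  filter_upwards [Ioo_mem_nhdsLT_of_mem (Set.mem_Ioc.mpr ⟨h, le_rfl⟩)] with t ht
  exact key t ht.1.le ht.2

end Aux

/-- Modular inequality: `∫_{G/H} φ(|T_H f|/k) dm ≤ ∫_G φ(|f|/k) dx` for `f ∈ C_c(G)`, `k > 0`. -/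
theorem TH_modular_inequality
    {G : Type*} [Group G] [TopologicalSpace G] [IsTopologicalGroup G] [LocallyCompactSpace G]
    [MeasurableSpace G] [BorelSpace G]
    (μ : Measure G) [μ.IsHaarMeasure]
    (H : Subgroup G) (hHc : IsCompact (H : Set G))
    (ν : Measure H) [ν.IsHaarMeasure] [IsProbabilityMeasure ν]
    (m : Measure (G ⧸ H))
    (weil : ∀ f : G → ℝ≥0∞, Measurable f →
      ∀ F : G ⧸ H → ℝ≥0∞,
        (∀ x : G, F (QuotientGroup.mk x) = ∫⁻ h : H, f (x * (h : G)) ∂ν) →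
        ∫⁻ p, F p ∂m = ∫⁻ x, f x ∂μ)
    (φ : ℝ → ℝ≥0∞) (hφ : IsYoung φ)
    (f : G → ℝ) (hf : Continuous f) (hfc : HasCompactSupport f)
    (F : G ⧸ H → ℝ)
    (hF : ∀ x : G, F (QuotientGroup.mk x) = ∫ h : H, f (x * (h : G)) ∂ν) :
    ∀ k : ℝ, 0 < k →
      ∫⁻ p, φ (|F p| / k) ∂m ≤ ∫⁻ x, φ (|f x| / k) ∂μ := by
  obtain ⟨hφ0, hconv, heven, hlc, h0, htop⟩ := hφ
  intro k hk
  have mono := young_mono hconv h0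
  haveI : CompactSpace ↥H := isCompact_iff_compactSpace.mp hHc
  haveI : BorelSpace ↥H := Subtype.borelSpace (H : Set G)
  -- measurability of the composed integrand
  have hψmono : Monotone (fun t : ℝ => φ (max t 0)) := fun a b hab =>
    mono _ _ (le_max_right _ _) (max_le_max hab le_rfl)
  have hψmeas : Measurable (fun t : ℝ => φ (max t 0)) := hψmono.measurable
  set Φ : G → ℝ≥0∞ := fun x => φ (|f x| / k) with hΦdef
  have hΦmeas : Measurable Φ := by
    have heq : Φ = (fun t : ℝ => φ (max t 0)) ∘ (fun x => |f x| / k) := by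
      funext x
      simp only [hΦdef, Function.comp_apply,
        max_eq_left (by positivity : (0:ℝ) ≤ |f x| / k)]
    rw [heq]
    exact hψmeas.comp ((hf.abs.div_const k).measurable)
  set F' : G ⧸ H → ℝ≥0∞ := fun p => ∫⁻ h : H, Φ (Quotient.out p * (h : G)) ∂ν with hF'def
  have hF'eq : ∀ x : G, F' (QuotientGroup.mk x) = ∫⁻ h : H, Φ (x * (h : G)) ∂ν := by
    intro x
    have hout : (QuotientGroup.mk (Quotient.out (QuotientGroup.mk x : G ⧸ H)) : G ⧸ H)
        = QuotientGroup.mk x := QuotientGroup.out_eq' _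
    set y := Quotient.out (QuotientGroup.mk x : G ⧸ H) with hy
    have hmem : x⁻¹ * y ∈ H := QuotientGroup.eq.mp hout.symm
    set h₀ : ↥H := ⟨x⁻¹ * y, hmem⟩ with hh₀
    have hxy : ∀ h : ↥H, y * (h : G) = x * (((h₀ * h : ↥H) : G)) := by
      intro h
      simp only [hh₀, Subgroup.coe_mul, Subgroup.coe_mk]
      group
    calc F' (QuotientGroup.mk x) = ∫⁻ h : H, Φ (y * (h : G)) ∂ν := rfl
      _ = ∫⁻ h : H, (fun h : H => Φ (x * (h : G))) (h₀ * h) ∂ν := by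
          refine lintegral_congr fun h => ?_
          simp only [hxy h]
      _ = ∫⁻ h : H, Φ (x * (h : G)) ∂ν := lintegral_mul_left_eq_self (fun h : ↥H => Φ (x * (h : G))) h₀
  rw [show (∫⁻ x, φ (|f x| / k) ∂μ) = ∫⁻ x, Φ x ∂μ from rfl, ← weil Φ hΦmeas F' hF'eq]
  apply lintegral_mono
  intro p
  induction p using Quotient.inductionOn' with
  | h x =>
    show φ (|F (QuotientGroup.mk x)| / k) ≤ F' (QuotientGroup.mk x)
    rw [hF x, hF'eq x]
    set g : ↥H → ℝ := fun h => |f (x * (h : G))| / k with hgdef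
    have hgc : Continuous g := by
      exact ((hf.comp ((continuous_mul_left x).comp continuous_subtype_val)).abs).div_const k
    have hgm : Measurable g := hgc.measurable
    have hgi : Integrable g ν :=
      hgc.integrable_of_hasCompactSupport (IsClosed.isCompact (isClosed_tsupport g))
    have hfi : Integrable (fun h : H => f (x * (h : G))) ν := by
      have : Continuous (fun h : H => f (x * (h : G))) :=
        hf.comp ((continuous_mul_left x).comp continuous_subtype_val)
      exact this.integrable_of_hasCompactSupport (IsClosed.isCompact (isClosed_tsupport _))
    have hg0 : ∀ h : ↥H, 0 ≤ g h := fun h => by positivity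
    have step1 : |∫ h : H, f (x * (h : G)) ∂ν| / k ≤ ∫ h : H, g h ∂ν := by
      rw [hgdef]
      rw [integral_div]
      gcongr
      calc |∫ h : H, f (x * (h : G)) ∂ν| = ‖∫ h : H, f (x * (h : G)) ∂ν‖ :=
            (Real.norm_eq_abs _).symm
        _ ≤ ∫ h : H, ‖f (x * (h : G))‖ ∂ν := norm_integral_le_integral_norm _
        _ = ∫ h : H, |f (x * (h : G))| ∂ν := by simp [Real.norm_eq_abs]
    calc φ (|∫ h : H, f (x * (h : G)) ∂ν| / k)
        ≤ φ (∫ h : H, g h ∂ν) := mono _ _ (by positivity) step1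
      _ ≤ ∫⁻ h : H, φ (g h) ∂ν := jensen_young ν hconv hlc h0 g hgm hgi hg0
      _ = ∫⁻ h : H, Φ (x * (h : G)) ∂ν := rfl
end

section
/- Let G be a locally compact group, H a compact subgroup, m the normalized G-invariant measure on G/H satisfying Weil's formula, and φ a Young function satisfying the Δ₂-condition. If f ∈ L^φ(G/H, m) then f_q := f ∘ q belongs to L^φ(G) and ‖f_q‖⁰_{L^φ(G)} = ‖f‖⁰_{L^φ(G/H,m)}. -/
open MeasureTheory Filter Topology ENNReal NNReal

/-- If `f ∈ L^φ(G/H, m)` then `f_q = f ∘ q ∈ L^φ(G)` and `‖f_q‖⁰ = ‖f‖⁰`. -/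
theorem lift_memLphi_and_luxNorm_eq
    {G : Type*} [Group G] [TopologicalSpace G] [IsTopologicalGroup G] [LocallyCompactSpace G]
    [MeasurableSpace G] [BorelSpace G]
    (μ : Measure G) [μ.IsHaarMeasure]
    (H : Subgroup G) (hHc : IsCompact (H : Set G))
    (ν : Measure H) [ν.IsHaarMeasure] [IsProbabilityMeasure ν]
    (m : Measure (G ⧸ H))
    (weil : ∀ f : G → ℝ≥0∞, Measurable f →
      ∀ F : G ⧸ H → ℝ≥0∞,
        (∀ x : G, F (QuotientGroup.mk x) = ∫⁻ h : H, f (x * (h : G)) ∂ν) →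
        ∫⁻ p, F p ∂m = ∫⁻ x, f x ∂μ)
    (φ : ℝ → ℝ≥0∞) (hφ : IsYoung φ) (hΔ : IsDelta2 φ)
    (f : G ⧸ H → ℂ) (hf : Measurable f) (hfφ : MemLphi φ m f) :
    MemLphi φ μ (fun x : G => f (QuotientGroup.mk x)) ∧
      luxNorm φ μ (fun x : G => f (QuotientGroup.mk x)) = luxNorm φ m f := by

  obtain ⟨hφ0, hconv, heven, hlc, hφzero, htop⟩ := hφ
  -- φ is monotone on [0,∞)
  have hmono : MonotoneOn φ (Set.Ici 0) := by
    intro x hx y hy hxy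
    rcases eq_or_lt_of_le (Set.mem_Ici.mp hy : (0:ℝ) ≤ y) with h0 | h0
    · have : x = y := le_antisymm hxy (h0 ▸ hx)
      simp [this]
    · have hxy' : x / y ≤ 1 := by
        rw [div_le_one h0]; exact hxy
      have h1 : (x / y) * y + (1 - x / y) * 0 = x := by field_simp; ring
      have := hconv y 0 (x / y) (1 - x / y) (div_nonneg hx h0.le)
        (by linarith) (by ring)
      rw [h1, hφzero, mul_zero, add_zero] at this
      calc φ x ≤ ENNReal.ofReal (x / y) * φ y := this
        _ ≤ 1 * φ y := by
            gcongr
            exact ENNReal.ofReal_le_one.mpr hxy'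
        _ = φ y := one_mul _
  -- a globally monotone, hence measurable, modification of φ
  set ψ : ℝ → ℝ≥0∞ := fun t => φ (max t 0) with hψ
  have hψmono : Monotone ψ := fun a b hab =>
    hmono (Set.mem_Ici.mpr (le_max_right a 0)) (Set.mem_Ici.mpr (le_max_right b 0))
      (max_le_max hab le_rfl)
  have hψmeas : Measurable ψ := hψmono.measurable
  have hψeq : ∀ t : ℝ, 0 ≤ t → ψ t = φ t := fun t ht => by
    simp [hψ, max_eq_left ht]
  have hqmeas : Measurable (fun x : G => f (QuotientGroup.mk x)) :=
    hf.comp (measurable_quotient_mk' (s := QuotientGroup.leftRel H))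
  -- key: Weil transfer for any nonneg measurable u
  have key : ∀ u : G ⧸ H → ℝ, Measurable u → (∀ p, 0 ≤ u p) →
      ∫⁻ x, φ (u (QuotientGroup.mk x)) ∂μ = ∫⁻ p, φ (u p) ∂m := by
    intro u humeas hunn
    have hglift : Measurable (fun x : G => φ (u (QuotientGroup.mk x))) := by
      have : (fun x : G => φ (u (QuotientGroup.mk x)))
          = fun x : G => ψ (u (QuotientGroup.mk x)) := by
        funext x; exact (hψeq _ (hunn _)).symm
      rw [this]
      exact hψmeas.comp (humeas.comp (measurable_quotient_mk' (s := QuotientGroup.leftRel H)))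
    refine (weil (fun x : G => φ (u (QuotientGroup.mk x))) hglift
      (fun p => φ (u p)) ?_).symm
    intro x
    have hconst : ∀ h : H, φ (u (QuotientGroup.mk (x * (h : G))))
        = φ (u (QuotientGroup.mk x)) := by
      intro h
      have : QuotientGroup.mk (x * (h : G)) = (QuotientGroup.mk x : G ⧸ H) := by
        apply Quotient.sound'
        rw [QuotientGroup.leftRel_apply]
        simp
      rw [this]
    simp only [hconst]
    simp
  constructor
  · constructor
    · exact hqmeas.aestronglyMeasurable
    · obtain ⟨-, a, ha, hint⟩ := hfφ
      refine ⟨a, ha, ?_⟩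
      have := key (fun p => a * ‖f p‖) (by fun_prop)
        (fun p => mul_nonneg ha.le (norm_nonneg _))
      simpa using this ▸ hint
  · unfold luxNorm
    congr 1
    ext k
    simp only [Set.mem_setOf_eq, and_congr_right_iff]
    intro hk
    have := key (fun p => ‖f p‖ / k) (by fun_prop)
      (fun p => div_nonneg (norm_nonneg _) hk.le)
    rw [this]
end

section
/- Let G be a locally compact group, H a compact subgroup, and m the normalized G-invariant measure on G/H satisfying Weil's formula. For f, g ∈ C_c(G/H) define f *_{G/H} g (xH) = ∫_{G/H} f(yH) Jg(y⁻¹xH) dm(yH), where Jg(xH) = ∫_H g(hxH) dh. Then (f *_{G/H} g) ∘ q = (f ∘ q) *_G (g ∘ q), where *_G is the usual convolution on G and q : G → G/H the quotient map. -/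
open MeasureTheory Filter Topology ENNReal NNReal

open scoped Pointwise in
lemma aux_isCompact_preimage {G : Type*} [Group G] [TopologicalSpace G] [IsTopologicalGroup G]
    [LocallyCompactSpace G] (H : Subgroup G) (hHc : IsCompact (H : Set G))
    {S : Set (G ⧸ H)} (hS : IsCompact S) (hScl : IsClosed S) :
    IsCompact ((QuotientGroup.mk : G → G ⧸ H) ⁻¹' S) := by
  have hcont : Continuous (QuotientGroup.mk : G → G ⧸ H) := continuous_quotient_mk'
  have key : ∀ p ∈ S, ∃ L : Set G, IsCompact L ∧ p ∈ QuotientGroup.mk '' (interior L) := by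
    intro p _
    obtain ⟨g, rfl⟩ := QuotientGroup.mk_surjective p
    obtain ⟨L, hLc, hLn⟩ := exists_compact_mem_nhds g
    exact ⟨L, hLc, ⟨g, mem_interior_iff_mem_nhds.2 hLn, rfl⟩⟩
  choose! L hLc hLmem using key
  obtain ⟨t, hts, htfin, hcov⟩ := hS.elim_finite_subcover_image
    (fun p (_ : p ∈ S) => QuotientGroup.isOpenMap_coe (interior (L p)) isOpen_interior)
    (fun p hp => Set.mem_biUnion hp (hLmem p hp))
  refine IsCompact.of_isClosed_subset
    (htfin.isCompact_biUnion fun p hp => (hLc p (hts hp)).mul hHc)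
    (hScl.preimage hcont) ?_
  intro y hy
  have h1 := hcov hy
  simp only [Set.mem_iUnion] at h1 ⊢
  obtain ⟨p, hp, hyp⟩ := h1
  refine ⟨p, hp, ?_⟩
  rw [← QuotientGroup.preimage_image_mk_eq_mul]
  exact Set.mem_preimage.2 (Set.image_mono interior_subset hyp)

/-- `(f *_{G/H} g) ∘ q = (f ∘ q) *_G (g ∘ q)` for `f, g ∈ C_c(G/H)`. -/
theorem conv_lift_eq_lift_conv
    {G : Type*} [Group G] [TopologicalSpace G] [IsTopologicalGroup G] [LocallyCompactSpace G]
    [MeasurableSpace G] [BorelSpace G]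
    (μ : Measure G) [μ.IsHaarMeasure]
    (H : Subgroup G) (hHc : IsCompact (H : Set G))
    (ν : Measure H) [ν.IsHaarMeasure] [IsProbabilityMeasure ν]
    (m : Measure (G ⧸ H))
    (weil : ∀ f : G → ℝ, Continuous f → HasCompactSupport f →
      ∀ F : G ⧸ H → ℝ,
        (∀ x : G, F (QuotientGroup.mk x) = ∫ h : H, f (x * (h : G)) ∂ν) →
        ∫ p, F p ∂m = ∫ x, f x ∂μ)
    (f g : G ⧸ H → ℝ) (hf : Continuous f) (hfc : HasCompactSupport f)
    (hg : Continuous g) (hgc : HasCompactSupport g)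
    (Jg : G ⧸ H → ℝ)
    (hJg : ∀ x : G, Jg (QuotientGroup.mk x) =
      ∫ h : H, g (QuotientGroup.mk ((h : G) * x)) ∂ν)
    (K : G ⧸ H → G ⧸ H → ℝ)
    (hK : ∀ y x : G, K (QuotientGroup.mk y) (QuotientGroup.mk x) =
      Jg (QuotientGroup.mk (y⁻¹ * x))) :
    ∀ x : G,
      ∫ p, f p * K p (QuotientGroup.mk x) ∂m =
        ∫ y, f (QuotientGroup.mk y) * g (QuotientGroup.mk (y⁻¹ * x)) ∂μ := by
  haveI : CompactSpace H := isCompact_iff_compactSpace.mp hHc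
  haveI : BorelSpace H := Subtype.borelSpace _
  have huniq : ∀ (μ' : Measure H), μ'.IsMulLeftInvariant → IsProbabilityMeasure μ' → μ' = ν := by
    intro μ' h1 h2
    haveI := h1; haveI := h2
    have e := Measure.isMulInvariant_eq_smul_of_compactSpace μ' ν
    have hc : Measure.haarScalarFactor μ' ν = 1 := by
      have h3 := congrArg (fun mm : Measure H => mm Set.univ) e
      simp only [measure_univ, Measure.smul_apply, smul_eq_mul, mul_one,
        ENNReal.smul_def, ENNReal.coe_eq_one] at h3
      exact_mod_cast h3.symm
    rw [e, hc, one_smul]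
  haveI hRight : ν.IsMulRightInvariant := by
    constructor
    intro k
    exact huniq _ inferInstance (Measure.isProbabilityMeasure_map (measurable_mul_const k).aemeasurable)
  haveI hInv : ν.IsInvInvariant := by
    constructor
    refine huniq _ inferInstance ?_
    constructor
    rw [Measure.inv_apply]
    simp
  intro x
  set φ : G → ℝ := fun y => f (QuotientGroup.mk y) * g (QuotientGroup.mk (y⁻¹ * x)) with hφdef
  have hφ : Continuous φ :=
    (hf.comp continuous_quotient_mk').mul
      ((hg.comp continuous_quotient_mk').comp (continuous_inv.mul continuous_const))
  have hφs : HasCompactSupport φ := by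
    apply HasCompactSupport.intro' (aux_isCompact_preimage H hHc hfc (isClosed_tsupport f))
      ((isClosed_tsupport f).preimage continuous_quotient_mk')
    intro y hy
    simp only [hφdef, image_eq_zero_of_notMem_tsupport hy, zero_mul]
  have hF' : ∀ y : G, f (QuotientGroup.mk y) * K (QuotientGroup.mk y) (QuotientGroup.mk x)
      = ∫ h : H, φ (y * h) ∂ν := by
    intro y
    have e1 : ∀ h : H, φ (y * h) =
        f (QuotientGroup.mk y) * g (QuotientGroup.mk ((h : G)⁻¹ * (y⁻¹ * x))) := by
      intro h
      simp only [hφdef]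
      rw [QuotientGroup.mk_mul_of_mem y h.2]
      congr 2
      group
    simp_rw [e1]
    rw [integral_const_mul]
    have e2 : ∫ h : H, g (QuotientGroup.mk ((h : G)⁻¹ * (y⁻¹ * x))) ∂ν
        = ∫ h : H, g (QuotientGroup.mk ((h : G) * (y⁻¹ * x))) ∂ν := by
      have h4 := integral_inv_eq_self
        (fun h : H => g (QuotientGroup.mk ((h : G) * (y⁻¹ * x)))) ν
      simpa using h4
    rw [e2, ← hJg (y⁻¹ * x), ← hK y x]
  exact weil φ hφ hφs (fun p => f p * K p (QuotientGroup.mk x)) hF'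
end

section
/- Let G be a locally compact group, H a compact subgroup, m the normalized G-invariant measure on G/H with Weil's formula. For f, g ∈ C_c(G/H), the convolution f *_{G/H} g (xH) = ∫_{G/H} f(yH) Jg(y⁻¹xH) dm(yH) satisfies f *_{G/H} g = T_H((f∘q) *_G (g∘q)), and C_c(G/H) with *_{G/H} is an associative algebra. -/
open MeasureTheory Filter Topology ENNReal NNReal

open Pointwise

section AuxLemmas


variable {G : Type*} [Group G] [TopologicalSpace G] [IsTopologicalGroup G]
  [MeasurableSpace G] [BorelSpace G]

omit [MeasurableSpace G] [BorelSpace G] in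
lemma auxq_lift [LocallyCompactSpace G] (H : Subgroup G) {S : Set (G ⧸ H)} (hS : IsCompact S) :
    ∃ K : Set G, IsCompact K ∧ S ⊆ (QuotientGroup.mk : G → G ⧸ H) '' K := by
  have h : ∀ p : G ⧸ H, ∃ K : Set G, IsCompact K ∧
      ((QuotientGroup.mk : G → G ⧸ H) '' K) ∈ 𝓝 p := by
    intro p
    obtain ⟨x, rfl⟩ := QuotientGroup.mk_surjective p
    obtain ⟨N, hN, hNx⟩ := exists_compact_mem_nhds x
    exact ⟨N, hN, QuotientGroup.isOpenQuotientMap_mk.map_nhds_eq x ▸ Filter.image_mem_map hNx⟩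
  choose K hKc hKn using h
  obtain ⟨t, ht⟩ := hS.elim_nhds_subcover (fun p => (QuotientGroup.mk : G → G ⧸ H) '' K p)
    (fun p _ => hKn p)
  refine ⟨⋃ p ∈ t, K p, t.finite_toSet.isCompact_biUnion (fun p _ => hKc p), ?_⟩
  rw [Set.image_iUnion₂]
  exact ht.2

omit [MeasurableSpace G] [BorelSpace G] in
lemma auxq_pre [LocallyCompactSpace G] (H : Subgroup G) (hHc : IsCompact (H : Set G))
    {S : Set (G ⧸ H)} (hS : IsCompact S) (hScl : IsClosed S) :
    IsCompact ((QuotientGroup.mk : G → G ⧸ H) ⁻¹' S) := by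
  obtain ⟨K, hKc, hSK⟩ := auxq_lift H hS
  have hsub : (QuotientGroup.mk : G → G ⧸ H) ⁻¹' S ⊆ K * (H : Set G) := by
    intro x hx
    obtain ⟨k, hk, hkx⟩ := hSK hx
    have hm : k⁻¹ * x ∈ H := QuotientGroup.eq.mp hkx
    have := Set.mul_mem_mul hk hm
    simpa [mul_assoc] using this
  exact (hKc.mul hHc).of_isClosed_subset (hScl.preimage QuotientGroup.continuous_mk) hsub

lemma auxq_inv (H : Subgroup G) (hHc : IsCompact (H : Set G)) (ν : Measure H)
    [ν.IsHaarMeasure] [IsProbabilityMeasure ν] (A : H → ℝ) (hA : Continuous A) :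
    ∫ h, A h⁻¹ ∂ν = ∫ h, A h ∂ν := by
  haveI : CompactSpace H := isCompact_iff_compactSpace.mp hHc
  haveI : BorelSpace H := Subtype.borelSpace (H : Set G)
  haveI : IsProbabilityMeasure ν.inv :=
    ⟨by rw [Measure.inv, Measure.map_apply measurable_inv .univ]; simp⟩
  have hswap := integral_integral_swap_of_hasCompactSupport
      (f := fun y x : H => A (y * x)) (hA.comp continuous_mul)
      ((isClosed_tsupport _).isCompact) (μ := ν.inv) (ν := ν)
  simp_rw [integral_mul_left_eq_self A, integral_mul_right_eq_self A] at hswap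
  rw [integral_const, integral_const, probReal_univ, probReal_univ] at hswap
  have h3 : ∫ h, A h ∂ν.inv = ∫ h, A h⁻¹ ∂ν := by
    rw [Measure.inv]
    exact (MeasurableEquiv.inv H).measurableEmbedding.integral_map _
  simp only [one_smul, ENNReal.toReal_one] at hswap
  rw [h3] at hswap
  exact hswap.symm

lemma auxq_cont (μ : Measure G) [IsFiniteMeasureOnCompacts μ] [LocallyCompactSpace G]
    {a b : G → ℝ}
    (ha : Continuous a) (hb : Continuous b) (hbs : HasCompactSupport b) :
    Continuous (fun x : G => ∫ y, a y * b (y⁻¹ * x) ∂μ) := by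
  apply continuous_iff_continuousAt.2 (fun x₀ => ?_)
  obtain ⟨t, t_comp, ht⟩ := exists_compact_mem_nhds x₀
  have k_comp : IsCompact (tsupport b) := hbs
  have k'_comp : IsCompact (t * (tsupport b)⁻¹) := t_comp.mul k_comp.inv
  have A : ContinuousOn (fun x : G => ∫ y, a y * b (y⁻¹ * x) ∂μ) t := by
    apply continuousOn_integral_of_compact_support k'_comp
    · exact ((ha.comp continuous_snd).mul
        (hb.comp (continuous_snd.inv.mul continuous_fst))).continuousOn
    · intro p y hp hy
      have hb0 : b (y⁻¹ * p) = 0 := by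
        by_contra h
        have hmem : y⁻¹ * p ∈ tsupport b := subset_tsupport b h
        have hmm : p * (y⁻¹ * p)⁻¹ ∈ t * (tsupport b)⁻¹ :=
          Set.mul_mem_mul hp (Set.inv_mem_inv.2 hmem)
        have he : p * (y⁻¹ * p)⁻¹ = y := by group
        exact hy (he ▸ hmm)
      simp [hb0]
  exact A.continuousAt ht

end AuxLemmas

/-- `c` is the convolution `f *_{G/H} g`, i.e.
`c(xH) = ∫_{G/H} f(yH) Jg(y⁻¹xH) dm(yH)` where `Jg(xH) = ∫_H g(hxH) dh`. -/
def IsConv {G : Type*} [Group G] [MeasurableSpace G] (H : Subgroup G)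
    (ν : Measure H) (m : Measure (G ⧸ H)) (f g c : G ⧸ H → ℝ) : Prop :=
  ∃ (Jg : G ⧸ H → ℝ) (K : G ⧸ H → G ⧸ H → ℝ),
    (∀ x : G, Jg (QuotientGroup.mk x) =
      ∫ h : H, g (QuotientGroup.mk ((h : G) * x)) ∂ν) ∧
    (∀ y x : G, K (QuotientGroup.mk y) (QuotientGroup.mk x) =
      Jg (QuotientGroup.mk (y⁻¹ * x))) ∧
    ∀ x : G, c (QuotientGroup.mk x) = ∫ p, f p * K p (QuotientGroup.mk x) ∂m

section AuxConv


variable {G : Type*} [Group G] [TopologicalSpace G] [IsTopologicalGroup G]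
  [MeasurableSpace G] [BorelSpace G]

lemma auxq_conv (μ : Measure G) (H : Subgroup G) (hHc : IsCompact (H : Set G))
    (ν : Measure H) [ν.IsHaarMeasure] [IsProbabilityMeasure ν]
    (m : Measure (G ⧸ H))
    (weil : ∀ f : G → ℝ, Continuous f → HasCompactSupport f →
      ∀ F : G ⧸ H → ℝ,
        (∀ x : G, F (QuotientGroup.mk x) = ∫ h : H, f (x * (h : G)) ∂ν) →
        ∫ p, F p ∂m = ∫ x, f x ∂μ)
    (f' g' c : G ⧸ H → ℝ)
    (hf' : Continuous fun y : G => f' (QuotientGroup.mk y))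
    (hg' : Continuous fun y : G => g' (QuotientGroup.mk y))
    (S : Set G) (hSc : IsCompact S) (hScl : IsClosed S)
    (hSsupp : ∀ y : G, g' (QuotientGroup.mk y) ≠ 0 → y ∈ S)
    (hcv : IsConv H ν m f' g' c) (x : G) :
    c (QuotientGroup.mk x) =
      ∫ y, f' (QuotientGroup.mk y) * g' (QuotientGroup.mk (y⁻¹ * x)) ∂μ := by
  obtain ⟨J, K, hJ, hK, hc⟩ := hcv
  rw [hc x]
  set φ : G → ℝ := fun y => f' (QuotientGroup.mk y) * g' (QuotientGroup.mk (y⁻¹ * x)) with hφ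
  have hφc : Continuous φ := hf'.mul (hg'.comp (continuous_inv.mul continuous_const))
  have hφs : HasCompactSupport φ := by
    set e : G ≃ₜ G := (Homeomorph.inv G).trans (Homeomorph.mulLeft x) with he
    apply HasCompactSupport.intro' (hSc.image e.continuous) (e.isClosedMap S hScl)
    intro y hy
    by_contra h0
    apply hy
    have hg0 : g' (QuotientGroup.mk (y⁻¹ * x)) ≠ 0 := fun h => h0 (by simp [hφ, h])
    refine ⟨y⁻¹ * x, hSsupp _ hg0, ?_⟩
    simp [he, Homeomorph.trans, Homeomorph.mulLeft]
  have hFq : ∀ y : G, f' (QuotientGroup.mk y) * K (QuotientGroup.mk y) (QuotientGroup.mk x)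
      = ∫ h : H, φ (y * (h : G)) ∂ν := by
    intro y
    rw [hK y x, hJ (y⁻¹ * x)]
    have h1 : ∀ h : H, φ (y * (h : G)) =
        f' (QuotientGroup.mk y) *
          g' (QuotientGroup.mk (((h⁻¹ : H) : G) * (y⁻¹ * x))) := by
      intro h
      simp only [hφ]
      rw [QuotientGroup.mk_mul_of_mem y h.2]
      congr 2
      push_cast
      group
    simp_rw [h1]
    rw [integral_const_mul]
    congr 1
    exact (auxq_inv H hHc ν
      (fun h : H => g' (QuotientGroup.mk ((h : G) * (y⁻¹ * x))))
      (hg'.comp (continuous_subtype_val.mul continuous_const))).symm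
  exact weil φ hφc hφs (fun p => f' p * K p (QuotientGroup.mk x)) hFq

end AuxConv

/-- `f *_{G/H} g = T_H((f∘q) *_G (g∘q))`, and `*_{G/H}` is associative on `C_c(G/H)`. -/
theorem conv_eq_TH_and_assoc
    {G : Type*} [Group G] [TopologicalSpace G] [IsTopologicalGroup G] [LocallyCompactSpace G]
    [MeasurableSpace G] [BorelSpace G]
    (μ : Measure G) [μ.IsHaarMeasure]
    (H : Subgroup G) (hHc : IsCompact (H : Set G))
    (ν : Measure H) [ν.IsHaarMeasure] [IsProbabilityMeasure ν]
    (m : Measure (G ⧸ H))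
    (weil : ∀ f : G → ℝ, Continuous f → HasCompactSupport f →
      ∀ F : G ⧸ H → ℝ,
        (∀ x : G, F (QuotientGroup.mk x) = ∫ h : H, f (x * (h : G)) ∂ν) →
        ∫ p, F p ∂m = ∫ x, f x ∂μ)
    (f g : G ⧸ H → ℝ) (hf : Continuous f) (hfc : HasCompactSupport f)
    (hg : Continuous g) (hgc : HasCompactSupport g) :
    (∀ c : G ⧸ H → ℝ, IsConv H ν m f g c →
      ∀ x : G, c (QuotientGroup.mk x) =
        ∫ h : H, (∫ y, f (QuotientGroup.mk y) *
          g (QuotientGroup.mk (y⁻¹ * (x * (h : G)))) ∂μ) ∂ν) ∧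
    ∀ u : G ⧸ H → ℝ, Continuous u → HasCompactSupport u →
      ∀ c₁ c₂ c₃ c₄ : G ⧸ H → ℝ,
        IsConv H ν m f g c₁ → IsConv H ν m c₁ u c₂ →
        IsConv H ν m g u c₃ → IsConv H ν m f c₃ c₄ → c₂ = c₄ := by
  have hF : Continuous fun y : G => f (QuotientGroup.mk y) :=
    hf.comp QuotientGroup.continuous_mk
  have hGg : Continuous fun y : G => g (QuotientGroup.mk y) :=
    hg.comp QuotientGroup.continuous_mk
  -- preimages of supports
  have hSfc : IsCompact ((QuotientGroup.mk : G → G ⧸ H) ⁻¹' tsupport f) :=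
    auxq_pre H hHc hfc (isClosed_tsupport f)
  have hSfcl : IsClosed ((QuotientGroup.mk : G → G ⧸ H) ⁻¹' tsupport f) :=
    (isClosed_tsupport f).preimage QuotientGroup.continuous_mk
  have hSgc : IsCompact ((QuotientGroup.mk : G → G ⧸ H) ⁻¹' tsupport g) :=
    auxq_pre H hHc hgc (isClosed_tsupport g)
  have hSgcl : IsClosed ((QuotientGroup.mk : G → G ⧸ H) ⁻¹' tsupport g) :=
    (isClosed_tsupport g).preimage QuotientGroup.continuous_mk
  have hgs : ∀ y : G, g (QuotientGroup.mk y) ≠ 0 →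
      y ∈ (QuotientGroup.mk : G → G ⧸ H) ⁻¹' tsupport g :=
    fun y hy => subset_tsupport g hy
  have hfs : ∀ y : G, f (QuotientGroup.mk y) ≠ 0 →
      y ∈ (QuotientGroup.mk : G → G ⧸ H) ⁻¹' tsupport f :=
    fun y hy => subset_tsupport f hy
  constructor
  · -- Part 1
    intro c hcv x
    have h1 := auxq_conv μ H hHc ν m weil f g c hF hGg _ hSgc hSgcl hgs hcv x
    rw [h1]
    have h2 : ∀ h : H, (∫ y, f (QuotientGroup.mk y) *
        g (QuotientGroup.mk (y⁻¹ * (x * (h : G)))) ∂μ)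
        = ∫ y, f (QuotientGroup.mk y) * g (QuotientGroup.mk (y⁻¹ * x)) ∂μ := by
      intro h
      have hmk : ∀ y : G, (QuotientGroup.mk (y⁻¹ * (x * (h : G))) : G ⧸ H)
          = QuotientGroup.mk (y⁻¹ * x) := by
        intro y
        rw [← mul_assoc]
        exact QuotientGroup.mk_mul_of_mem _ h.2
      simp_rw [hmk]
    simp_rw [h2]
    rw [integral_const, probReal_univ, one_smul]
  · -- Part 2: associativity
    intro u hu huc c₁ c₂ c₃ c₄ h1 h2 h3 h4
    have hU : Continuous fun y : G => u (QuotientGroup.mk y) :=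
      hu.comp QuotientGroup.continuous_mk
    have hSuc : IsCompact ((QuotientGroup.mk : G → G ⧸ H) ⁻¹' tsupport u) :=
      auxq_pre H hHc huc (isClosed_tsupport u)
    have hSucl : IsClosed ((QuotientGroup.mk : G → G ⧸ H) ⁻¹' tsupport u) :=
      (isClosed_tsupport u).preimage QuotientGroup.continuous_mk
    have hus : ∀ y : G, u (QuotientGroup.mk y) ≠ 0 →
        y ∈ (QuotientGroup.mk : G → G ⧸ H) ⁻¹' tsupport u :=
      fun y hy => subset_tsupport u hy
    -- compact supports on G
    have hGgs : HasCompactSupport fun y : G => g (QuotientGroup.mk y) :=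
      hSgc.of_isClosed_subset (isClosed_tsupport _) (closure_minimal hgs hSgcl)
    have hUs : HasCompactSupport fun y : G => u (QuotientGroup.mk y) :=
      hSuc.of_isClosed_subset (isClosed_tsupport _) (closure_minimal hus hSucl)
    -- explicit formulas
    have e1 : ∀ x : G, c₁ (QuotientGroup.mk x) =
        ∫ y, f (QuotientGroup.mk y) * g (QuotientGroup.mk (y⁻¹ * x)) ∂μ :=
      fun x => auxq_conv μ H hHc ν m weil f g c₁ hF hGg _ hSgc hSgcl hgs h1 x
    have e3 : ∀ x : G, c₃ (QuotientGroup.mk x) =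
        ∫ y, g (QuotientGroup.mk y) * u (QuotientGroup.mk (y⁻¹ * x)) ∂μ :=
      fun x => auxq_conv μ H hHc ν m weil g u c₃ hGg hU _ hSuc hSucl hus h3 x
    -- continuity of the lifted convolutions
    have hc1q : Continuous fun x : G => c₁ (QuotientGroup.mk x) := by
      have he : (fun x : G => c₁ (QuotientGroup.mk x)) =
          fun x : G => ∫ y, f (QuotientGroup.mk y) * g (QuotientGroup.mk (y⁻¹ * x)) ∂μ :=
        funext e1
      rw [he]
      exact auxq_cont μ hF hGg hGgs
    have hc3q : Continuous fun x : G => c₃ (QuotientGroup.mk x) := by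
      have he : (fun x : G => c₃ (QuotientGroup.mk x)) =
          fun x : G => ∫ y, g (QuotientGroup.mk y) * u (QuotientGroup.mk (y⁻¹ * x)) ∂μ :=
        funext e3
      rw [he]
      exact auxq_cont μ hGg hU hUs
    have e2 : ∀ x : G, c₂ (QuotientGroup.mk x) =
        ∫ y, c₁ (QuotientGroup.mk y) * u (QuotientGroup.mk (y⁻¹ * x)) ∂μ :=
      fun x => auxq_conv μ H hHc ν m weil c₁ u c₂ hc1q hU _ hSuc hSucl hus h2 x
    -- support of c₃ on G
    have hSS : IsCompact ((QuotientGroup.mk : G → G ⧸ H) ⁻¹' tsupport g *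
        (QuotientGroup.mk : G → G ⧸ H) ⁻¹' tsupport u) := hSgc.mul hSuc
    have hSScl : IsClosed ((QuotientGroup.mk : G → G ⧸ H) ⁻¹' tsupport g *
        (QuotientGroup.mk : G → G ⧸ H) ⁻¹' tsupport u) :=
      hSucl.mul_left_of_isCompact hSgc
    have hc3s : ∀ y : G, c₃ (QuotientGroup.mk y) ≠ 0 →
        y ∈ (QuotientGroup.mk : G → G ⧸ H) ⁻¹' tsupport g *
          (QuotientGroup.mk : G → G ⧸ H) ⁻¹' tsupport u := by
      intro y hy
      by_contra hmem
      apply hy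
      rw [e3 y]
      have hz : ∀ z : G, g (QuotientGroup.mk z) * u (QuotientGroup.mk (z⁻¹ * y)) = 0 := by
        intro z
        by_contra h0
        have hz1 : g (QuotientGroup.mk z) ≠ 0 := fun h => h0 (by simp [h])
        have hz2 : u (QuotientGroup.mk (z⁻¹ * y)) ≠ 0 := fun h => h0 (by simp [h])
        apply hmem
        have := Set.mul_mem_mul (hgs z hz1) (hus _ hz2)
        simpa using this
      simp only [hz, integral_zero]
    have e4 : ∀ x : G, c₄ (QuotientGroup.mk x) =
        ∫ y, f (QuotientGroup.mk y) * c₃ (QuotientGroup.mk (y⁻¹ * x)) ∂μ :=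
      fun x => auxq_conv μ H hHc ν m weil f c₃ c₄ hF hc3q _ hSS hSScl hc3s h4 x
    -- final computation
    funext p
    obtain ⟨x, rfl⟩ := QuotientGroup.mk_surjective p
    rw [e2 x, e4 x]
    have step1 : ∫ y, c₁ (QuotientGroup.mk y) * u (QuotientGroup.mk (y⁻¹ * x)) ∂μ
        = ∫ y, (∫ z, f (QuotientGroup.mk z) * g (QuotientGroup.mk (z⁻¹ * y)) ∂μ) *
            u (QuotientGroup.mk (y⁻¹ * x)) ∂μ := by
      simp_rw [e1]
    have step4 : ∫ y, f (QuotientGroup.mk y) * c₃ (QuotientGroup.mk (y⁻¹ * x)) ∂μ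
        = ∫ y, f (QuotientGroup.mk y) *
            (∫ w, g (QuotientGroup.mk w) * u (QuotientGroup.mk (w⁻¹ * (y⁻¹ * x))) ∂μ) ∂μ := by
      simp_rw [e3]
    rw [step1, step4]
    -- Fubini data
    set e : G ≃ₜ G := (Homeomorph.inv G).trans (Homeomorph.mulLeft x) with hedef
    have hTc : IsCompact (e '' ((QuotientGroup.mk : G → G ⧸ H) ⁻¹' tsupport u)) :=
      hSuc.image e.continuous
    have hTcl : IsClosed (e '' ((QuotientGroup.mk : G → G ⧸ H) ⁻¹' tsupport u)) :=
      e.isClosedMap _ hSucl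
    have hcont : Continuous (Function.uncurry fun y z : G =>
        (f (QuotientGroup.mk z) * g (QuotientGroup.mk (z⁻¹ * y))) *
          u (QuotientGroup.mk (y⁻¹ * x))) := by
      exact ((hF.comp continuous_snd).mul
        (hGg.comp (continuous_snd.inv.mul continuous_fst))).mul
        (hU.comp (continuous_fst.inv.mul continuous_const))
    have hsupp : HasCompactSupport (Function.uncurry fun y z : G =>
        (f (QuotientGroup.mk z) * g (QuotientGroup.mk (z⁻¹ * y))) *
          u (QuotientGroup.mk (y⁻¹ * x))) := by
      apply HasCompactSupport.intro'
        (hTc.prod hSfc) (hTcl.prod hSfcl)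
      rintro ⟨y, z⟩ hyz
      by_contra h0
      apply hyz
      have hz1 : f (QuotientGroup.mk z) ≠ 0 := fun h => h0 (by simp [Function.uncurry, h])
      have hz2 : u (QuotientGroup.mk (y⁻¹ * x)) ≠ 0 := fun h => h0 (by simp [Function.uncurry, h])
      constructor
      · refine ⟨y⁻¹ * x, hus _ hz2, ?_⟩
        simp [hedef, Homeomorph.trans, Homeomorph.mulLeft]
      · exact hfs z hz1
    calc ∫ y, (∫ z, f (QuotientGroup.mk z) * g (QuotientGroup.mk (z⁻¹ * y)) ∂μ) *
            u (QuotientGroup.mk (y⁻¹ * x)) ∂μ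
        = ∫ y, ∫ z, (f (QuotientGroup.mk z) * g (QuotientGroup.mk (z⁻¹ * y))) *
            u (QuotientGroup.mk (y⁻¹ * x)) ∂μ ∂μ := by
          congr 1
          funext y
          rw [integral_mul_const]
      _ = ∫ z, ∫ y, (f (QuotientGroup.mk z) * g (QuotientGroup.mk (z⁻¹ * y))) *
            u (QuotientGroup.mk (y⁻¹ * x)) ∂μ ∂μ :=
          integral_integral_swap_of_hasCompactSupport hcont hsupp
      _ = ∫ z, f (QuotientGroup.mk z) *
            (∫ w, g (QuotientGroup.mk w) * u (QuotientGroup.mk (w⁻¹ * (z⁻¹ * x))) ∂μ) ∂μ := by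
          congr 1
          funext z
          calc ∫ y, (f (QuotientGroup.mk z) * g (QuotientGroup.mk (z⁻¹ * y))) *
                u (QuotientGroup.mk (y⁻¹ * x)) ∂μ
              = ∫ w, (f (QuotientGroup.mk z) * g (QuotientGroup.mk (z⁻¹ * (z * w)))) *
                u (QuotientGroup.mk ((z * w)⁻¹ * x)) ∂μ :=
                (integral_mul_left_eq_self (fun y => (f (QuotientGroup.mk z) *
                  g (QuotientGroup.mk (z⁻¹ * y))) * u (QuotientGroup.mk (y⁻¹ * x))) z).symm
            _ = ∫ w, f (QuotientGroup.mk z) *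
                (g (QuotientGroup.mk w) * u (QuotientGroup.mk (w⁻¹ * (z⁻¹ * x)))) ∂μ := by
                congr 1
                funext w
                rw [inv_mul_cancel_left, mul_assoc]
                congr 3
                group
            _ = f (QuotientGroup.mk z) *
                ∫ w, g (QuotientGroup.mk w) * u (QuotientGroup.mk (w⁻¹ * (z⁻¹ * x))) ∂μ :=
                integral_const_mul _ _
end
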